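/- For every permutation w of {1,...,2n} with crossout marking, z(w) = n² + ∑_{i=1}^n (h_i(p_A(w)) - 1) - ab(w) - bb(w), where z(w) = #{i<j : w(i)<w(j), i marked B}, ab(w) counts inversions i<j with i marked A and j marked B, and bb(w) counts inversions with both marked B. -/

import Mathlib

open Finset

/-- `D ⊆ {1,…,L}` is the set of down steps of a Dyck path of length `L`:
it has `L/2` elements and every prefix has at least as many up steps as down steps. -/
def IsDyck (L : ℕ) (D : Finset ℕ) : Prop :=
  D ⊆ Finset.Icc 1 L ∧ 2 * D.card = L ∧ ∀ k ≤ L, 2 * (D.filter (· ≤ k)).card ≤ k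

instance (L : ℕ) : DecidablePred (IsDyck L) := fun D => by
  unfold IsDyck; infer_instance

/-- The collection of all Dyck paths (encoded by their down-step sets) of length `L`. -/
def dyckPaths (L : ℕ) : Finset (Finset ℕ) :=
  (Finset.Icc 1 L).powerset.filter (IsDyck L)

/-- The position (in `{1,…,L}`) of the `i`-th down step (`1`-indexed). -/
def dstep (D : Finset ℕ) (i : ℕ) : ℕ := (D.sort (· ≤ ·)).getD (i - 1) 0

/-- The height `h_i` of the `i`-th down step of a Dyck path:  the step goes from
`(d_i - 1, h_i)` to `(d_i, h_i - 1)`; equivalently `h_i = d_i + 1 - 2 i`. -/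
def ht (D : Finset ℕ) (i : ℕ) : ℕ := dstep D i + 1 - 2 * i

/-- The modified height `h_i^*`: equal to `h_i - 1` if there is no up step to the right of
the `i`-th down step, and to `h_i` otherwise. -/
def hstar (L : ℕ) (D : Finset ℕ) (i : ℕ) : ℕ :=
  if Finset.Ioc (dstep D i) L ⊆ D then ht D i - 1 else ht D i

/-- `crossout w k` is the pair (positions marked A, positions marked B) after `k` rounds of
the crossout procedure: in each round, first mark B at the unmarked position with the smallest
value `w i`, then mark A at the leftmost unmarked position. -/
def crossout {N : ℕ} (w : Equiv.Perm (Fin N)) : ℕ → Finset (Fin N) × Finset (Fin N)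
  | 0 => (∅, ∅)
  | k + 1 =>
    let p := crossout w k
    let u := (Finset.univ : Finset (Fin N)) \ (p.1 ∪ p.2)
    if hu : u.Nonempty then
      let b := w.symm ((u.image w).min' (hu.image _))
      if ha : (u.erase b).Nonempty then
        (insert ((u.erase b).min' ha) p.1, insert b p.2)
      else (p.1, insert b p.2)
    else p

/-- The set of positions marked A under the crossout procedure. -/
def markA {N : ℕ} (w : Equiv.Perm (Fin N)) : Finset (Fin N) := (crossout w N).1

/-- The set of positions marked B under the crossout procedure. -/
def markB {N : ℕ} (w : Equiv.Perm (Fin N)) : Finset (Fin N) := (crossout w N).2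

/-- Down-step set of Alice's path `p_A(w)`:  the values (in `{1,…,N}`) at positions marked A. -/
def pAset {N : ℕ} (w : Equiv.Perm (Fin N)) : Finset ℕ :=
  (markA w).image (fun a => Fin.val (w a) + 1)

/-- Down-step set of Bob's path `p_B(w)`:  `{b + 1 : b marked B} ∪ {N + 2}`
(positions taken in `{1,…,N}`, so `b + 1` becomes `(b : ℕ) + 2`). -/
def pBset {N : ℕ} (w : Equiv.Perm (Fin N)) : Finset ℕ :=
  insert (N + 2) ((markB w).image (fun b => Fin.val b + 2))

/-- Number of AA inversions of `w`. -/
def aaInv {N : ℕ} (w : Equiv.Perm (Fin N)) : ℕ :=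
  (Finset.univ.filter (fun p : Fin N × Fin N =>
    p.1 < p.2 ∧ w p.2 < w p.1 ∧ p.1 ∈ markA w ∧ p.2 ∈ markA w)).card

/-- Number of BB inversions of `w`. -/
def bbInv {N : ℕ} (w : Equiv.Perm (Fin N)) : ℕ :=
  (Finset.univ.filter (fun p : Fin N × Fin N =>
    p.1 < p.2 ∧ w p.2 < w p.1 ∧ p.1 ∈ markB w ∧ p.2 ∈ markB w)).card

/-- Number of AB inversions of `w`. -/
def abInv {N : ℕ} (w : Equiv.Perm (Fin N)) : ℕ :=
  (Finset.univ.filter (fun p : Fin N × Fin N =>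
    p.1 < p.2 ∧ w p.2 < w p.1 ∧ p.1 ∈ markA w ∧ p.2 ∈ markB w)).card

/-- Total number of inversions of `w`. -/
def invW {N : ℕ} (w : Equiv.Perm (Fin N)) : ℕ :=
  (Finset.univ.filter (fun p : Fin N × Fin N => p.1 < p.2 ∧ w p.2 < w p.1)).card

/-- The statistic `z(w) = #{i < j : w i < w j and i is marked B}`. -/
def zstat {N : ℕ} (w : Equiv.Perm (Fin N)) : ℕ :=
  (Finset.univ.filter (fun p : Fin N × Fin N =>
    p.1 < p.2 ∧ w p.1 < w p.2 ∧ p.1 ∈ markB w)).card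

/-- Label carried by the down step of `p_A` corresponding to the A-position `a`:
one plus the number of A-positions to the left of `a` with larger value. -/
def labelA {N : ℕ} (w : Equiv.Perm (Fin N)) (a : Fin N) : ℕ :=
  1 + ((markA w).filter (fun a' => a' < a ∧ w a < w a')).card

/-- The label sequence `ℓ` of `p_A(w)`: `ellSeq w r` is the label on the `r`-th down step. -/
def ellSeq {N : ℕ} (w : Equiv.Perm (Fin N)) (r : ℕ) : ℕ :=
  ∑ a ∈ (markA w).filter (fun a => Fin.val (w a) + 1 = dstep (pAset w) r), labelA w a

/-- Label carried by the down step of `p_B` corresponding to the B-position `b`: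
one plus the number of B-positions to the right of `b` with smaller value. -/
def labelB {N : ℕ} (w : Equiv.Perm (Fin N)) (b : Fin N) : ℕ :=
  1 + ((markB w).filter (fun b' => w b' < w b ∧ b < b')).card

/-- The label sequence `m` of `p_B(w)`: `emSeq w r` is the label on the `r`-th down step. -/
def emSeq {N : ℕ} (w : Equiv.Perm (Fin N)) (r : ℕ) : ℕ :=
  ∑ b ∈ (markB w).filter (fun b => Fin.val b + 2 = dstep (pBset w) r), labelB w b

/-- The `q`-integer `[k]_q = 1 + q + ⋯ + q^{k-1}` in `ℤ[q]`. -/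
noncomputable def qint (k : ℕ) : Polynomial ℤ := ∑ j ∈ Finset.range k, Polynomial.X ^ j

/-- The `q`-integer `[k]` in the variable `X v` of the two-variable polynomial ring. -/
noncomputable def qint2 (v : Fin 2) (k : ℕ) : MvPolynomial (Fin 2) ℤ :=
  ∑ j ∈ Finset.range k, (MvPolynomial.X v) ^ j

/-- `M` is a perfect matching of `{1,…,2n}`: a family of pairwise disjoint 2-element sets
whose union is `{1,…,2n}`. -/
def IsMatching (n : ℕ) (M : Finset (Finset ℕ)) : Prop :=
  (∀ e ∈ M, e.card = 2) ∧ (M : Set (Finset ℕ)).PairwiseDisjoint id ∧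
    M.biUnion id = Finset.Icc 1 (2 * n)

/-!
Both sides equal `∑_{a ∈ A} w a` (values counted from `0`), where `A`, `B` are the positions
marked A and B. On the left, splitting the pairs `(x, y)` with `x ∈ A` and `w y < w x` according
to whether `y` lies in `A` or `B` and to the left or right of `x` gives
`∑_A w a = C(n,2) + ab + c`, while `z + bb = C(n,2) + c`, where `c` counts the pairs `i < j`
with `i ∈ B`, `j ∈ A`, `w i < w j`; of the crossout, only `|A| = |B|` enters here.
On the right, the `i`-th down step `d_i` of `p_A` has `h_i - 1 = d_i - 2i`. This is a genuine
difference because `p_A` is a Dyck path: each round of the crossout marks B at a smaller value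
than A, so every initial segment of values contains at least as many B's as A's. Hence
`n² + ∑ (h_i - 1) = ∑ d_i - n = ∑_A w a`.
-/

theorem Finset.sum_Icc_one_eq_sum_fin {M : Type*} [AddCommMonoid M] (f : ℕ → M) (n : ℕ) :
    ∑ i ∈ Icc 1 n, f i = ∑ j : Fin n, f (j + 1) := by
  rw [Fin.sum_univ_eq_sum_range (fun j => f (j + 1)), ← Ico_add_one_right_eq_Icc,
    sum_Ico_eq_sum_range]
  simp [add_comm]

theorem dstep_succ (D : Finset ℕ) (i : Fin D.card) :
    dstep D (i + 1) = D.orderEmbOfFin rfl i := by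
  simp [dstep, orderEmbOfFin_apply]

theorem sum_dstep (D : Finset ℕ) : ∑ i ∈ Icc 1 D.card, dstep D i = ∑ x ∈ D, x := by
  rw [sum_Icc_one_eq_sum_fin]
  simp_rw [dstep_succ]
  conv_rhs => rw [← image_orderEmbOfFin_univ D rfl]
  rw [sum_image fun i _ j _ h => (D.orderEmbOfFin rfl).injective h]

theorem IsDyck.two_mul_le_dstep {L : ℕ} {D : Finset ℕ} (hD : IsDyck L D) (i : Fin D.card) :
    2 * (i + 1) ≤ dstep D (i + 1) := by
  set e := D.orderEmbOfFin rfl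
  have hprefix : (Iic i).map e.toEmbedding ⊆ D.filter (· ≤ e i) := by
    intro x hx
    obtain ⟨j, hj, rfl⟩ := mem_map.mp hx
    exact mem_filter.mpr ⟨orderEmbOfFin_mem D rfl j, e.monotone (mem_Iic.mp hj)⟩
  have hle : e i ≤ L := (mem_Icc.mp (hD.1 (orderEmbOfFin_mem D rfl i))).2
  have := card_le_card hprefix
  rw [card_map, Fin.card_Iic] at this
  rw [dstep_succ]
  linarith [hD.2.2 _ hle]

theorem IsDyck.sum_ht_sub_one {L : ℕ} {D : Finset ℕ} (hD : IsDyck L D) :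
    ∑ i ∈ Icc 1 D.card, (ht D i - 1) + D.card * (D.card + 1) = ∑ x ∈ D, x := by
  have hgauss : ∑ j : Fin D.card, 2 * ((j : ℕ) + 1) = D.card * (D.card + 1) := by
    rw [Fin.sum_univ_eq_sum_range (fun j => 2 * (j + 1))]
    induction #D with
    | zero => rfl
    | succ m ih => rw [sum_range_succ, ih]; ring
  rw [← sum_dstep, sum_Icc_one_eq_sum_fin, sum_Icc_one_eq_sum_fin, ← hgauss, ← sum_add_distrib]
  refine sum_congr rfl fun i _ => ?_
  have := hD.two_mul_le_dstep i
  unfold ht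
  omega

section PairCounts

variable {N : ℕ} (w : Equiv.Perm (Fin N))

def exceedCount (s t : Finset (Fin N)) : ℕ := #{p ∈ s ×ˢ t | w p.2 < w p.1}

def invCount (s t : Finset (Fin N)) : ℕ :=
  #{p : Fin N × Fin N | p.1 < p.2 ∧ w p.2 < w p.1 ∧ p.1 ∈ s ∧ p.2 ∈ t}

def ascCount (s t : Finset (Fin N)) : ℕ :=
  #{p : Fin N × Fin N | p.1 < p.2 ∧ w p.1 < w p.2 ∧ p.1 ∈ s ∧ p.2 ∈ t}

theorem exceedCount_eq_invCount_add_ascCount (s t : Finset (Fin N)) :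
    exceedCount w s t = invCount w s t + ascCount w t s := by
  rw [exceedCount, ← card_filter_add_card_filter_not (fun p : Fin N × Fin N => p.1 < p.2)]
  congr 1
  · congr 1; ext p; simp only [mem_filter, mem_product, mem_univ, true_and]; tauto
  · refine card_equiv (Equiv.prodComm _ _) fun p => ?_
    simp only [mem_filter, mem_product, mem_univ, true_and, Equiv.prodComm_apply, Prod.fst_swap,
      Prod.snd_swap, not_lt]
    constructor
    · rintro ⟨⟨⟨hs, ht⟩, hw⟩, hle⟩
      exact ⟨lt_of_le_of_ne hle fun h => hw.ne (by rw [h]), hw, ht, hs⟩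
    · rintro ⟨hlt, hw, ht, hs⟩
      exact ⟨⟨⟨hs, ht⟩, hw⟩, hlt.le⟩

theorem two_mul_exceedCount_self (s : Finset (Fin N)) :
    2 * exceedCount w s s = #s * #s - #s := by
  have hoff : exceedCount w s s = #{p ∈ s.offDiag | w p.2 < w p.1} := by
    rw [exceedCount]; congr 1; ext p
    simp only [mem_filter, mem_product, mem_offDiag]
    exact ⟨fun ⟨⟨hs, ht⟩, hw⟩ => ⟨⟨hs, ht, fun h => hw.ne (by rw [h])⟩, hw⟩,
      fun ⟨⟨hs, ht, _⟩, hw⟩ => ⟨⟨hs, ht⟩, hw⟩⟩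
  have hswap : #{p ∈ s.offDiag | w p.2 < w p.1} = #{p ∈ s.offDiag | ¬ w p.2 < w p.1} := by
    refine card_equiv (Equiv.prodComm _ _) fun p => ?_
    simp only [mem_filter, mem_offDiag, Equiv.prodComm_apply, Prod.fst_swap, Prod.snd_swap,
      not_lt]
    exact ⟨fun ⟨⟨hs, ht, hne⟩, hw⟩ => ⟨⟨ht, hs, Ne.symm hne⟩, hw.le⟩,
      fun ⟨⟨ht, hs, hne⟩, hw⟩ => ⟨⟨hs, ht, Ne.symm hne⟩,
        lt_of_le_of_ne hw fun h => hne (w.injective h)⟩⟩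
  rw [← offDiag_card, ← card_filter_add_card_filter_not (fun p : Fin N × Fin N => w p.2 < w p.1),
    ← hswap, hoff, two_mul]

theorem exceedCount_union_right (s : Finset (Fin N)) {t t' : Finset (Fin N)}
    (h : Disjoint t t') :
    exceedCount w s (t ∪ t') = exceedCount w s t + exceedCount w s t' := by
  rw [exceedCount, product_union, filter_union, card_union_of_disjoint
    (disjoint_filter_filter (disjoint_product.mpr (Or.inr h)))]
  rfl

theorem ascCount_union_right (s : Finset (Fin N)) {t t' : Finset (Fin N)}
    (h : Disjoint t t') :
    ascCount w s (t ∪ t') = ascCount w s t + ascCount w s t' := by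
  rw [ascCount, ascCount, ascCount, ← card_union_of_disjoint, ← filter_or]
  · congr 1; ext p; simp only [mem_filter, mem_univ, true_and, mem_union]; tauto
  · exact disjoint_filter.mpr fun p _ hp hp' => disjoint_left.mp h hp.2.2.2 hp'.2.2.2

theorem sum_val_eq_exceedCount_univ (s : Finset (Fin N)) :
    ∑ x ∈ s, (w x : ℕ) = exceedCount w s univ := by
  rw [exceedCount, card_filter, sum_product]
  refine sum_congr rfl fun x _ => ?_
  rw [← card_filter, card_equiv w (t := Iio (w x)) fun y => by simp, Fin.card_Iio]

theorem injective_val_add_one :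
    Function.Injective fun a => (w a : ℕ) + 1 :=
  fun _ _ h => w.injective (Fin.ext (Nat.add_right_cancel h))

theorem card_filter_val_lt_le (t : ℕ) :
    #{x | (w x : ℕ) < t} ≤ t := by
  simpa using card_le_card_of_injOn (fun x => (w x : ℕ)) (t := range t)
    (fun x hx => by simpa using hx) fun x _ y _ h => w.injective (Fin.ext h)

theorem ascCount_univ_add_invCount_add_invCount {A B : Finset (Fin N)} (hdisj : Disjoint A B) (hunion : A ∪ B = univ) (hcard : #A = #B) :
    ascCount w B univ + invCount w A B + invCount w B B = ∑ a ∈ A, (w a : ℕ) := by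
  have hself : exceedCount w A A = exceedCount w B B := by
    have hA := two_mul_exceedCount_self w A
    have hB := two_mul_exceedCount_self w B
    rw [hcard] at hA
    omega
  rw [sum_val_eq_exceedCount_univ, ← hunion, exceedCount_union_right _ _ hdisj,
    ascCount_union_right _ _ hdisj, hself, exceedCount_eq_invCount_add_ascCount,
    exceedCount_eq_invCount_add_ascCount]
  ring

end PairCounts

section Crossout

variable {N : ℕ} (w : Equiv.Perm (Fin N))

def unmarked (k : ℕ) : Finset (Fin N) := univ \ ((crossout w k).1 ∪ (crossout w k).2)

theorem crossout_succ_of_unmarked_eq_empty {k : ℕ} (h : unmarked w k = ∅) :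
    crossout w (k + 1) = crossout w k := by
  simp only [crossout, ← unmarked.eq_1, h, Finset.not_nonempty_empty, dite_false]

theorem exists_crossout_succ {k : ℕ} (h : 2 ≤ #(unmarked w k)) :
    ∃ a ∈ unmarked w k, ∃ b ∈ unmarked w k, w b < w a ∧
      crossout w (k + 1) = (insert a (crossout w k).1, insert b (crossout w k).2) := by
  have hu : (unmarked w k).Nonempty := card_pos.mp (by omega)
  set b := w.symm (((unmarked w k).image w).min' (hu.image w))
  have hb : b ∈ unmarked w k := by
    obtain ⟨x, hx, hwx⟩ := mem_image.mp (min'_mem _ (hu.image w))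
    simpa [b, ← hwx] using hx
  have hmin : ∀ x ∈ unmarked w k, w b ≤ w x := fun x hx => by
    simpa [b] using min'_le _ _ (mem_image_of_mem w hx)
  have ha : ((unmarked w k).erase b).Nonempty := by
    rw [← card_pos, card_erase_of_mem hb]; omega
  obtain ⟨hab, hau⟩ := mem_erase.mp (min'_mem _ ha)
  refine ⟨_, hau, b, hb, lt_of_le_of_ne (hmin _ hau) fun h => hab (w.injective h).symm, ?_⟩
  simp only [crossout, ← unmarked.eq_1, dif_pos hu]
  rw [dif_pos ha]

theorem crossout_spec {k : ℕ} (hk : 2 * k ≤ N) :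
    #(crossout w k).1 = k ∧ #(crossout w k).2 = k ∧ Disjoint (crossout w k).1 (crossout w k).2 ∧
      ∀ t : ℕ,
        #{a ∈ (crossout w k).1 | (w a : ℕ) < t} ≤ #{b ∈ (crossout w k).2 | (w b : ℕ) < t} := by
  induction k with
  | zero => simp [crossout]
  | succ k ih =>
    obtain ⟨hA, hB, hdisj, hdom⟩ := ih (by omega)
    have hcard : #(unmarked w k) = N - 2 * k := by
      rw [unmarked, card_sdiff_of_subset (subset_univ _), card_univ, Fintype.card_fin,
        card_union_of_disjoint hdisj, hA, hB, two_mul]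
    obtain ⟨a, ha, b, hb, hba, hstep⟩ := exists_crossout_succ w (by omega : 2 ≤ #(unmarked w k))
    simp only [unmarked, mem_sdiff, mem_union, mem_univ, true_and, not_or] at ha hb
    rw [hstep]
    refine ⟨by rw [card_insert_of_notMem ha.1, hA], by rw [card_insert_of_notMem hb.2, hB], ?_,
      fun t => ?_⟩
    · have hba' : b ≠ a := fun h => hba.ne (by rw [h])
      simp [disjoint_insert_left, disjoint_insert_right, hba', ha.2, hb.1, hdisj]
    · rw [filter_insert, filter_insert]
      by_cases hat : (w a : ℕ) < t
      · have hbt : (w b : ℕ) < t := lt_trans (Fin.lt_def.mp hba) hat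
        rw [if_pos hat, if_pos hbt, card_insert_of_notMem fun h => ha.1 (mem_filter.mp h).1,
          card_insert_of_notMem fun h => hb.2 (mem_filter.mp h).1]
        exact Nat.succ_le_succ (hdom t)
      · rw [if_neg hat]
        exact (hdom t).trans (card_le_card (by split_ifs <;> simp [subset_insert]))

end Crossout

section EvenLength

variable {n : ℕ} (w : Equiv.Perm (Fin (2 * n)))

theorem crossout_union_eq_univ : (crossout w n).1 ∪ (crossout w n).2 = univ := by
  obtain ⟨hA, hB, hdisj, -⟩ := crossout_spec w le_rfl
  exact eq_univ_of_card _ (by rw [card_union_of_disjoint hdisj, hA, hB, Fintype.card_fin, two_mul])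

theorem crossout_eq_of_le {m : ℕ} (hm : n ≤ m) : crossout w m = crossout w n := by
  induction m, hm using Nat.le_induction with
  | base => rfl
  | succ m _ ih =>
    have hdone : unmarked w m = ∅ := by
      rw [unmarked, ih, crossout_union_eq_univ, sdiff_self, bot_eq_empty]
    rw [crossout_succ_of_unmarked_eq_empty w hdone, ih]

theorem markA_eq : markA w = (crossout w n).1 := by
  rw [markA, crossout_eq_of_le w (by omega)]

theorem markB_eq : markB w = (crossout w n).2 := by
  rw [markB, crossout_eq_of_le w (by omega)]

theorem card_markA : #(markA w) = n := by
  rw [markA_eq]; exact (crossout_spec w le_rfl).1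

theorem card_markB : #(markB w) = n := by
  rw [markB_eq]; exact (crossout_spec w le_rfl).2.1

theorem disjoint_markA_markB : Disjoint (markA w) (markB w) := by
  rw [markA_eq, markB_eq]; exact (crossout_spec w le_rfl).2.2.1

theorem markA_union_markB : markA w ∪ markB w = univ := by
  rw [markA_eq, markB_eq, crossout_union_eq_univ]

theorem card_filter_markA_le_card_filter_markB (t : ℕ) :
    #{a ∈ markA w | (w a : ℕ) < t} ≤ #{b ∈ markB w | (w b : ℕ) < t} := by
  rw [markA_eq, markB_eq]; exact (crossout_spec w le_rfl).2.2.2 t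

end EvenLength

section PathA

variable {n : ℕ} (w : Equiv.Perm (Fin (2 * n)))

theorem card_pAset : #(pAset w) = n := by
  rw [pAset, card_image_of_injective _ (injective_val_add_one w), card_markA]

theorem sum_pAset : ∑ x ∈ pAset w, x = ∑ a ∈ markA w, (w a : ℕ) + n := by
  rw [pAset, sum_image fun _ _ _ _ h => injective_val_add_one w h, sum_add_distrib, sum_const,
    card_markA, smul_eq_mul, mul_one]

theorem pAset_isDyck : IsDyck (2 * n) (pAset w) := by
  refine ⟨fun x hx => ?_, by rw [card_pAset], fun k _ => ?_⟩
  · obtain ⟨a, -, rfl⟩ := mem_image.mp hx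
    simp only [mem_Icc]
    omega
  · have hfilter : #{x ∈ pAset w | x ≤ k} = #{a ∈ markA w | (w a : ℕ) < k} := by
      rw [pAset, filter_image, card_image_of_injective _ (injective_val_add_one w)]
      simp only [Nat.add_one_le_iff]
    have hsplit : #{a ∈ markA w | (w a : ℕ) < k} + #{b ∈ markB w | (w b : ℕ) < k} =
        #{x | (w x : ℕ) < k} := by
      rw [← card_union_of_disjoint (disjoint_filter_filter (disjoint_markA_markB w)),
        ← filter_union, markA_union_markB]
    have := card_filter_markA_le_card_filter_markB w k
    have := card_filter_val_lt_le w k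
    omega

end PathA

/-- for every permutation `w` of `{1,…,2n}`,
`z(w) = n² + ∑_{i=1}^n (h_i(p_A(w)) - 1) - ab(w) - bb(w)`
(stated additively to avoid truncated subtraction). -/
theorem stmt18 (n : ℕ) (w : Equiv.Perm (Fin (2 * n))) :
    zstat w + abInv w + bbInv w =
      n ^ 2 + ∑ i ∈ Finset.Icc 1 n, (ht (pAset w) i - 1) := by
  have hz : zstat w = ascCount w (markB w) univ := by
    simp only [zstat, ascCount, mem_univ, and_true]
  have hlhs : zstat w + abInv w + bbInv w = ∑ a ∈ markA w, (w a : ℕ) := by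
    rw [hz]
    exact ascCount_univ_add_invCount_add_invCount w (disjoint_markA_markB w)
      (markA_union_markB w) (by rw [card_markA, card_markB])
  have hrhs := (pAset_isDyck w).sum_ht_sub_one
  rw [card_pAset, sum_pAset] at hrhs
  rw [hlhs]
  linarith
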